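/- If r is a nonzero even integer, then ∫_0^π x·sin x / (L_r² − 4·sin² x) dx = (π/(2·√5·F_r))·arctan(2/(√5·F_r)); and if r is a positive odd integer, then ∫_0^π x·sin x / (5·F_r² − 4·sin² x) dx = (π/(2·L_r))·arctan(2/L_r). -/

import Mathlib

open Real MeasureTheory intervalIntegral

noncomputable def phi : ℝ := (1 + Real.sqrt 5) / 2
noncomputable def psi : ℝ := (1 - Real.sqrt 5) / 2
noncomputable def fibR (n : ℤ) : ℝ := (phi ^ n - psi ^ n) / Real.sqrt 5
noncomputable def lucR (n : ℤ) : ℝ := phi ^ n + psi ^ n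

lemma sqrt5_sq : Real.sqrt 5 ^ 2 = 5 := Real.sq_sqrt (by norm_num)
lemma sqrt5_lt : (2:ℝ) < Real.sqrt 5 := by
  rw [show (2:ℝ) = Real.sqrt 4 by rw [show (4:ℝ) = 2^2 by norm_num, Real.sqrt_sq]; norm_num]
  exact Real.sqrt_lt_sqrt (by norm_num) (by norm_num)
lemma sqrt5_lt3 : Real.sqrt 5 < 3 := by
  nlinarith [sqrt5_sq, Real.sqrt_nonneg 5]

lemma phi_psi : phi * psi = -1 := by
  unfold phi psi; nlinarith [sqrt5_sq]

lemma phi_pos : 0 < phi := by unfold phi; nlinarith [sqrt5_lt]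
lemma abs_psi : |psi| = (Real.sqrt 5 - 1) / 2 := by
  rw [abs_of_neg (by unfold psi; nlinarith [sqrt5_lt])]; unfold psi; ring
lemma abs_psi_pos : 0 < |psi| := by rw [abs_psi]; nlinarith [sqrt5_lt]
lemma abs_lt_abs : |psi| < |phi| := by
  rw [abs_psi, abs_of_pos phi_pos]; unfold phi; linarith

-- ratio > 1
lemma ratio_gt : 1 < |phi| / |psi| := (one_lt_div abs_psi_pos).mpr abs_lt_abs

lemma pow_ne (r : ℤ) (hr : r ≠ 0) : |phi| ^ r ≠ |psi| ^ r := by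
  intro h
  have hne : (|phi| / |psi|) ^ r = 1 := by
    rw [div_zpow, h, div_self (zpow_ne_zero r (ne_of_gt abs_psi_pos))]
  have := (zpow_right_strictMono₀ ratio_gt).injective
  have : r = 0 := by
    apply this
    show (|phi| / |psi|) ^ r = (|phi| / |psi|) ^ (0:ℤ)
    rw [hne, zpow_zero]
  exact hr this

lemma fibR_ne (r : ℤ) (hr : r ≠ 0) : fibR r ≠ 0 := by
  unfold fibR
  intro h
  have h5 : Real.sqrt 5 ≠ 0 := by nlinarith [sqrt5_lt]
  have : phi ^ r = psi ^ r := by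
    field_simp at h; linarith
  apply pow_ne r hr
  have e1 : |phi| ^ r = |phi ^ r| := (map_zpow₀ (absHom : ℝ →*₀ ℝ) phi r).symm
  have e2 : |psi| ^ r = |psi ^ r| := (map_zpow₀ (absHom : ℝ →*₀ ℝ) psi r).symm
  rw [e1, e2, this]

lemma lucR_ne (r : ℤ) (hr : r ≠ 0) : lucR r ≠ 0 := by
  unfold lucR
  intro h
  have : phi ^ r = -psi ^ r := by linarith
  apply pow_ne r hr
  have e1 : |phi| ^ r = |phi ^ r| := (map_zpow₀ (absHom : ℝ →*₀ ℝ) phi r).symm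
  have e2 : |psi| ^ r = |psi ^ r| := (map_zpow₀ (absHom : ℝ →*₀ ℝ) psi r).symm
  rw [e1, e2, this, abs_neg]

lemma cassini (r : ℤ) : lucR r ^ 2 - 5 * fibR r ^ 2 = 4 * (-1:ℝ) ^ r := by
  unfold lucR fibR
  have h5 : Real.sqrt 5 ≠ 0 := by nlinarith [sqrt5_lt]
  have hAB : phi ^ r * psi ^ r = (-1:ℝ) ^ r := by rw [← mul_zpow, phi_psi]
  field_simp
  nlinarith [sqrt5_sq, hAB]

lemma denom_pos (c : ℝ) (hc : c ≠ 0) (x : ℝ) : 0 < c ^ 2 + 4 * Real.cos x ^ 2 := by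
  have h : 0 < c ^ 2 := by positivity
  nlinarith [sq_nonneg (Real.cos x)]

lemma cont_g (c : ℝ) (hc : c ≠ 0) :
    Continuous (fun x : ℝ => Real.sin x / (c ^ 2 + 4 * Real.cos x ^ 2)) := by
  apply Continuous.div (by continuity) (by continuity)
  exact fun x => ne_of_gt (denom_pos c hc x)

lemma integralJ (c : ℝ) (hc : 0 < c) :
    ∫ x in (0:ℝ)..Real.pi, Real.sin x / (c ^ 2 + 4 * Real.cos x ^ 2)
      = 1 / c * Real.arctan (2 / c) := by
  have hc' : c ≠ 0 := ne_of_gt hc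
  have hder : ∀ x ∈ Set.uIcc (0:ℝ) Real.pi,
      HasDerivAt (fun x => -(1 / (2 * c)) * Real.arctan (2 * Real.cos x / c))
        (Real.sin x / (c ^ 2 + 4 * Real.cos x ^ 2)) x := by
    intro x _
    have h1 : HasDerivAt (fun x => 2 * Real.cos x / c) (2 * (-Real.sin x) / c) x :=
      ((Real.hasDerivAt_cos x).const_mul 2).div_const c
    have h2 := (Real.hasDerivAt_arctan (2 * Real.cos x / c)).comp x h1
    have h3 := h2.const_mul (-(1 / (2 * c)))
    refine h3.congr_deriv ?_
    have hpos : 0 < c ^ 2 + 4 * Real.cos x ^ 2 := denom_pos c hc' x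
    field_simp
    ring
  rw [integral_eq_sub_of_hasDerivAt hder ((cont_g c hc').intervalIntegrable _ _)]
  rw [Real.cos_pi, Real.cos_zero]
  have : 2 * (-1 : ℝ) / c = -(2 / c) := by ring
  rw [this, Real.arctan_neg]
  ring

lemma integralI (c : ℝ) (hc : 0 < c) :
    ∫ x in (0:ℝ)..Real.pi, x * Real.sin x / (c ^ 2 + 4 * Real.cos x ^ 2)
      = Real.pi / (2 * c) * Real.arctan (2 / c) := by
  have hc' : c ≠ 0 := ne_of_gt hc
  set g : ℝ → ℝ := fun x => Real.sin x / (c ^ 2 + 4 * Real.cos x ^ 2) with hg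
  have hgc : Continuous g := cont_g c hc'
  have hfc : Continuous (fun x : ℝ => x * g x) := continuous_id.mul hgc
  have hsym : ∫ x in (0:ℝ)..Real.pi, (Real.pi - x) * g (Real.pi - x)
      = ∫ x in (0:ℝ)..Real.pi, x * g x := by
    have := intervalIntegral.integral_comp_sub_left (fun y => y * g y) Real.pi
      (a := 0) (b := Real.pi)
    simpa using this
  have hgsym : ∀ x : ℝ, g (Real.pi - x) = g x := by
    intro x
    simp only [hg, Real.sin_pi_sub, Real.cos_pi_sub]
    ring_nf
  have key : ∫ x in (0:ℝ)..Real.pi, x * g x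
      = Real.pi * (∫ x in (0:ℝ)..Real.pi, g x) - ∫ x in (0:ℝ)..Real.pi, x * g x := by
    have heq : ∀ x : ℝ, (Real.pi - x) * g (Real.pi - x) = Real.pi * g x - x * g x := by
      intro x; rw [hgsym]; ring
    calc ∫ x in (0:ℝ)..Real.pi, x * g x
        = ∫ x in (0:ℝ)..Real.pi, (Real.pi - x) * g (Real.pi - x) := hsym.symm
      _ = ∫ x in (0:ℝ)..Real.pi, (Real.pi * g x - x * g x) := by simp only [heq]
      _ = Real.pi * (∫ x in (0:ℝ)..Real.pi, g x) - ∫ x in (0:ℝ)..Real.pi, x * g x := by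
          rw [intervalIntegral.integral_sub (f := fun x => Real.pi * g x) ((continuous_const.mul hgc).intervalIntegrable _ _)
            (hfc.intervalIntegrable _ _), intervalIntegral.integral_const_mul]
  have hJ : ∫ x in (0:ℝ)..Real.pi, g x = 1 / c * Real.arctan (2 / c) := integralJ c hc
  have : (∫ x in (0:ℝ)..Real.pi, x * g x) = Real.pi / 2 * (1 / c * Real.arctan (2 / c)) := by
    rw [hJ] at key; linarith
  calc ∫ x in (0:ℝ)..Real.pi, x * Real.sin x / (c ^ 2 + 4 * Real.cos x ^ 2)
      = ∫ x in (0:ℝ)..Real.pi, x * g x := by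
        congr 1; funext x; simp only [hg]; ring
    _ = Real.pi / (2 * c) * Real.arctan (2 / c) := by rw [this]; ring

lemma integralI' (c : ℝ) (hc : c ≠ 0) :
    ∫ x in (0:ℝ)..Real.pi, x * Real.sin x / (c ^ 2 + 4 * Real.cos x ^ 2)
      = Real.pi / (2 * c) * Real.arctan (2 / c) := by
  rcases hc.lt_or_gt with h | h
  · have := integralI (-c) (by linarith)
    have h2 : (2 : ℝ) / -c = -(2 / c) := by ring
    rw [h2, Real.arctan_neg, neg_sq] at this
    rw [this]; ring
  · exact integralI c h

theorem stmt19 (r : ℤ) :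
    (r ≠ 0 → Even r →
      ∫ x in (0 : ℝ)..Real.pi, x * Real.sin x / (lucR r ^ 2 - 4 * Real.sin x ^ 2) =
        Real.pi / (2 * Real.sqrt 5 * fibR r) * Real.arctan (2 / (Real.sqrt 5 * fibR r))) ∧
    (0 < r → Odd r →
      ∫ x in (0 : ℝ)..Real.pi, x * Real.sin x / (5 * fibR r ^ 2 - 4 * Real.sin x ^ 2) =
        Real.pi / (2 * lucR r) * Real.arctan (2 / lucR r)) := by
  constructor
  · intro h0 hev
    have hf : fibR r ≠ 0 := fibR_ne r h0
    have h5 : Real.sqrt 5 ≠ 0 := by nlinarith [sqrt5_lt]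
    have hc : Real.sqrt 5 * fibR r ≠ 0 := mul_ne_zero h5 hf
    have hneg1 : (-1:ℝ) ^ r = 1 := hev.neg_one_zpow
    have h1 : lucR r ^ 2 - 5 * fibR r ^ 2 = 4 := by rw [cassini, hneg1]; norm_num
    have hid : ∀ x : ℝ, lucR r ^ 2 - 4 * Real.sin x ^ 2
        = (Real.sqrt 5 * fibR r) ^ 2 + 4 * Real.cos x ^ 2 := by
      intro x
      linear_combination h1 - fibR r ^ 2 * sqrt5_sq - 4 * Real.sin_sq_add_cos_sq x
    calc ∫ x in (0:ℝ)..Real.pi, x * Real.sin x / (lucR r ^ 2 - 4 * Real.sin x ^ 2)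
        = ∫ x in (0:ℝ)..Real.pi,
            x * Real.sin x / ((Real.sqrt 5 * fibR r) ^ 2 + 4 * Real.cos x ^ 2) := by
          simp only [hid]
      _ = Real.pi / (2 * (Real.sqrt 5 * fibR r)) * Real.arctan (2 / (Real.sqrt 5 * fibR r)) :=
          integralI' _ hc
      _ = Real.pi / (2 * Real.sqrt 5 * fibR r) * Real.arctan (2 / (Real.sqrt 5 * fibR r)) := by
          ring_nf
  · intro h0 hodd
    have hl : lucR r ≠ 0 := lucR_ne r (by omega)
    have hneg1 : (-1:ℝ) ^ r = -1 := hodd.neg_one_zpow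
    have h1 : lucR r ^ 2 - 5 * fibR r ^ 2 = -4 := by rw [cassini, hneg1]; norm_num
    have hid : ∀ x : ℝ, 5 * fibR r ^ 2 - 4 * Real.sin x ^ 2
        = lucR r ^ 2 + 4 * Real.cos x ^ 2 := by
      intro x
      linear_combination -h1 - 4 * Real.sin_sq_add_cos_sq x
    calc ∫ x in (0:ℝ)..Real.pi, x * Real.sin x / (5 * fibR r ^ 2 - 4 * Real.sin x ^ 2)
        = ∫ x in (0:ℝ)..Real.pi, x * Real.sin x / (lucR r ^ 2 + 4 * Real.cos x ^ 2) := by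
          simp only [hid]
      _ = Real.pi / (2 * lucR r) * Real.arctan (2 / lucR r) := integralI' _ hl
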